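/- Let (L, (h_1, …, h_m)) be a backward self-similar system such that L_x is connected for every infinite word x ∈ {1, …, m}^ℕ. Then L is connected if and only if for every pair i, j ∈ {1, …, m} there exist s ≥ 1 and i_1, …, i_s ∈ {1, …, m} with i_1 = i, i_s = j, and h_{i_t}⁻¹(L) ∩ h_{i_{t+1}}⁻¹(L) ≠ ∅ for every t = 1, …, s−1. -/

import Mathlib

open Set

/-- `h_w⁻¹(L)` for a finite word `w = (w₁, …, w_k)`, encoded as the list `[w₁, …, w_k]`,
namely `h_{w₁}⁻¹(h_{w₂}⁻¹(⋯ h_{w_k}⁻¹(L) ⋯))`. -/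
def bwdPre {X : Type*} {m : ℕ} (h : Fin m → X → X) (L : Set X) : List (Fin m) → Set X
  | [] => L
  | a :: w => h a ⁻¹' bwdPre h L w

/-- The truncation `x|k` of an infinite word `x`. -/
def wordTrunc {m : ℕ} (x : ℕ → Fin m) (k : ℕ) : List (Fin m) :=
  List.ofFn fun i : Fin k => x i.val

/-- `L_x = ⋂_{j ≥ 1} h_{x|j}⁻¹(L)`. -/
def bwdLimSet {X : Type*} {m : ℕ} (h : Fin m → X → X) (L : Set X) (x : ℕ → Fin m) : Set X :=
  ⋂ j : ℕ, bwdPre h L (wordTrunc x (j + 1))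

section Aux

variable {X : Type*} {m : ℕ} {h : Fin m → X → X} {L : Set X}

lemma bwdPre_mono {L₁ L₂ : Set X} (hsub : L₁ ⊆ L₂) : ∀ w, bwdPre h L₁ w ⊆ bwdPre h L₂ w
  | [] => hsub
  | _ :: w => preimage_mono (bwdPre_mono hsub w)

lemma bwdPre_append (w w' : List (Fin m)) :
    bwdPre h L (w ++ w') = bwdPre h (bwdPre h L w') w := by
  induction w with
  | nil => rfl
  | cons a w ih => exact congrArg (fun s => h a ⁻¹' s) ih

lemma preimage_subset_self (hinv : L = ⋃ j, h j ⁻¹' L) (j : Fin m) : h j ⁻¹' L ⊆ L := by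
  conv_rhs => rw [hinv]
  exact subset_iUnion (fun j => h j ⁻¹' L) j

lemma bwdPre_subset (hinv : L = ⋃ j, h j ⁻¹' L) : ∀ w, bwdPre h L w ⊆ L
  | [] => subset_rfl
  | a :: w => (preimage_mono (bwdPre_subset hinv w)).trans (preimage_subset_self hinv a)

lemma bwdPre_isClosed [TopologicalSpace X] (hcont : ∀ j, Continuous (h j))
    (hLc : IsClosed L) : ∀ w, IsClosed (bwdPre h L w)
  | [] => hLc
  | a :: w => (bwdPre_isClosed hcont hLc w).preimage (hcont a)

lemma exists_word (hinv : L = ⋃ j, h j ⁻¹' L) :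
    ∀ k, ∀ z ∈ L, ∃ w : List (Fin m), w.length = k ∧ z ∈ bwdPre h L w := by
  intro k
  induction k with
  | zero => exact fun z hz => ⟨[], rfl, hz⟩
  | succ k ih =>
    intro z hz
    rw [hinv] at hz
    obtain ⟨j, hj⟩ := mem_iUnion.1 hz
    obtain ⟨w, hwl, hw⟩ := ih (h j z) hj
    exact ⟨j :: w, by simp [hwl], hw⟩

lemma wordTrunc_succ (x : ℕ → Fin m) (k : ℕ) :
    wordTrunc x (k + 1) = wordTrunc x k ++ [x k] := by
  rw [wordTrunc, List.ofFn_succ', List.concat_eq_append]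
  simp [wordTrunc]

lemma bwdPre_trunc_antitone (hinv : L = ⋃ j, h j ⁻¹' L) (x : ℕ → Fin m) :
    ∀ {j k : ℕ}, j ≤ k → bwdPre h L (wordTrunc x k) ⊆ bwdPre h L (wordTrunc x j) := by
  have step : ∀ k, bwdPre h L (wordTrunc x (k + 1)) ⊆ bwdPre h L (wordTrunc x k) := by
    intro k
    rw [wordTrunc_succ, bwdPre_append]
    exact bwdPre_mono (bwdPre_subset hinv [x k]) _
  intro j k hjk
  induction k with
  | zero => rw [Nat.le_zero.mp hjk]
  | succ k ih =>
    rcases Nat.lt_or_ge j (k + 1) with hlt | hge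
    · exact (step k).trans (ih (Nat.lt_succ_iff.mp hlt))
    · rw [Nat.le_antisymm hjk hge]

end Aux

section Aux2

variable {X : Type*} {m : ℕ} {h : Fin m → X → X} {L : Set X}

/-- Two words of length `k` whose preimage sets intersect. -/
def chainRel {X : Type*} {m : ℕ} (h : Fin m → X → X) (L : Set X) (k : ℕ)
    (u v : List (Fin m)) : Prop :=
  u.length = k ∧ v.length = k ∧ (bwdPre h L u ∩ bwdPre h L v).Nonempty

lemma reflTransGen_of_chain {α : Type*} {r : α → α → Prop} (n : ℕ) (c : ℕ → α)
    (hc : ∀ t < n, r (c t) (c (t + 1))) : Relation.ReflTransGen r (c 0) (c n) := by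
  induction n with
  | zero => exact .refl
  | succ n ih =>
    exact (ih fun t ht => hc t (ht.trans (Nat.lt_succ_self n))).tail (hc n (Nat.lt_succ_self n))

lemma chain_of_reflTransGen {α : Type*} {r : α → α → Prop} {i j : α}
    (hr : Relation.ReflTransGen r i j) :
    ∃ (n : ℕ) (c : ℕ → α), c 0 = i ∧ c n = j ∧ ∀ t < n, r (c t) (c (t + 1)) := by
  induction hr with
  | refl => exact ⟨0, fun _ => i, rfl, rfl, by omega⟩
  | @tail b d _ hbd ih =>
    obtain ⟨n, c, h0, hn, hstep⟩ := ih
    refine ⟨n + 1, fun t => if t ≤ n then c t else d, by simp [h0], by simp, ?_⟩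
    intro t ht
    rcases Nat.lt_or_ge t n with hlt | hge
    · simpa [Nat.le_of_lt hlt, Nat.succ_le_of_lt hlt] using hstep t hlt
    · have htn : t = n := by omega
      subst htn
      simpa [hn] using hbd

lemma preconn_side [TopologicalSpace X] [T2Space X] {s A B : Set X}
    (hpre : IsPreconnected s) (hs : s ⊆ A ∪ B) (hA : IsCompact A) (hB : IsCompact B)
    (hAB : Disjoint A B) : Disjoint s B ∨ Disjoint s A := by
  obtain ⟨U, V, hU, hV, hAU, hBV, hUV⟩ := SeparatedNhds.of_isCompact_isCompact hA hB hAB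
  rcases hpre.subset_or_subset hU hV hUV (hs.trans (union_subset_union hAU hBV)) with hsU | hsV
  · exact Or.inl (hUV.mono hsU hBV)
  · exact Or.inr (hUV.symm.mono hsV hAU)

lemma chain_all (hinv : L = ⋃ j, h j ⁻¹' L)
    (hfib : ∀ z ∈ L, ∀ j, (h j ⁻¹' ({z} : Set X)).Nonempty)
    (hbase : ∀ i j : Fin m,
      Relation.ReflTransGen (fun a b : Fin m => (h a ⁻¹' L ∩ h b ⁻¹' L).Nonempty) i j) :
    ∀ k, ∀ u v : List (Fin m), u.length = k → v.length = k →
      Relation.ReflTransGen (chainRel h L k) u v := by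
  intro k
  induction k with
  | zero =>
    intro u v hu hv
    rw [List.length_eq_zero_iff.mp hu, List.length_eq_zero_iff.mp hv]
  | succ k ih =>
    -- transporting a chain on tails to a chain with a common head
    have T : ∀ (a : Fin m) (u' v' : List (Fin m)), u'.length = k → v'.length = k →
        Relation.ReflTransGen (chainRel h L (k + 1)) (a :: u') (a :: v') := by
      intro a u' v' hu hv
      refine Relation.ReflTransGen.lift (fun w => a :: w) ?_ _ _ (ih u' v' hu hv)
      rintro p q ⟨hp, hq, z, hzp, hzq⟩
      refine ⟨by simp [hp], by simp [hq], ?_⟩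
      obtain ⟨y, hy⟩ := hfib z (bwdPre_subset hinv p hzp) a
      have hyz : h a y = z := hy
      exact ⟨y, show h a y ∈ bwdPre h L p by rw [hyz]; exact hzp,
        show h a y ∈ bwdPre h L q by rw [hyz]; exact hzq⟩
    have H : ∀ a b : Fin m,
        Relation.ReflTransGen (fun a b : Fin m => (h a ⁻¹' L ∩ h b ⁻¹' L).Nonempty) a b →
        ∀ u' v' : List (Fin m), u'.length = k → v'.length = k →
        Relation.ReflTransGen (chainRel h L (k + 1)) (a :: u') (b :: v') := by
      intro a b hab
      induction hab with
      | refl => exact fun u' v' hu hv => T a u' v' hu hv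
      | @tail b c _ hbc ih2 =>
        intro u' v' hu hv
        obtain ⟨z, hz1, hz2⟩ := hbc
        obtain ⟨uz, huzl, huz⟩ := exists_word hinv k (h b z) hz1
        obtain ⟨vz, hvzl, hvz⟩ := exists_word hinv k (h c z) hz2
        have step : chainRel h L (k + 1) (b :: uz) (c :: vz) :=
          ⟨by simp [huzl], by simp [hvzl], ⟨z, huz, hvz⟩⟩
        exact ((ih2 u' uz hu huzl).tail step).trans (T c vz v' hvzl hv)
    intro u v hu hv
    match u, v with
    | a :: u', b :: v' =>
      exact H a b (hbase a b) u' v' (by simpa using hu) (by simpa using hv)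

end Aux2


/-- For a backward self-similar system `(L, (h_1, …, h_m))` with every `L_x` connected,
`L` is connected iff any two generators are joined by a chain of generators whose
consecutive preimages of `L` intersect. -/
theorem backward_connected_iff_chain
    {X : Type*} [MetricSpace X] {m : ℕ} (hm : 1 ≤ m)
    (h : Fin m → X → X) (hcont : ∀ j, Continuous (h j))
    (L : Set X) (hLne : L.Nonempty) (hLcp : IsCompact L)
    (hinv : L = ⋃ j, h j ⁻¹' L)
    (hfib : ∀ z ∈ L, ∀ j, (h j ⁻¹' ({z} : Set X)).Nonempty)
    (hconn : ∀ x : ℕ → Fin m, IsConnected (bwdLimSet h L x)) :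
    IsConnected L ↔
      ∀ i j : Fin m, ∃ (n : ℕ) (c : ℕ → Fin m), c 0 = i ∧ c n = j ∧
        ∀ t < n, (h (c t) ⁻¹' L ∩ h (c (t + 1)) ⁻¹' L).Nonempty := by
  have hLcl : IsClosed L := hLcp.isClosed
  have hpre_ne : ∀ j : Fin m, (h j ⁻¹' L).Nonempty := by
    intro j
    obtain ⟨z, hz⟩ := hLne
    obtain ⟨y, hy⟩ := hfib z hz j
    have hyz : h j y = z := hy
    exact ⟨y, show h j y ∈ L by rw [hyz]; exact hz⟩
  set R1 : Fin m → Fin m → Prop := fun a b => (h a ⁻¹' L ∩ h b ⁻¹' L).Nonempty with hR1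
  constructor
  · intro hLconn i j
    suffices hRT : Relation.ReflTransGen R1 i j from chain_of_reflTransGen hRT
    by_contra hnot
    set A := ⋃ a ∈ {a : Fin m | Relation.ReflTransGen R1 i a}, h a ⁻¹' L with hA
    set B := ⋃ a ∈ {a : Fin m | ¬ Relation.ReflTransGen R1 i a}, h a ⁻¹' L with hB
    have hLAB : L ⊆ A ∪ B := by
      intro z hz
      rw [hinv] at hz
      obtain ⟨a, ha⟩ := mem_iUnion.1 hz
      by_cases hra : Relation.ReflTransGen R1 i a
      · exact Or.inl (mem_biUnion hra ha)
      · exact Or.inr (mem_biUnion hra ha)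
    have hAL : A ⊆ L := iUnion₂_subset fun a _ => preimage_subset_self hinv a
    have hBL : B ⊆ L := iUnion₂_subset fun a _ => preimage_subset_self hinv a
    have hABdisj : Disjoint A B := by
      rw [Set.disjoint_left]
      intro x hxA hxB
      obtain ⟨a, haR, hxa⟩ := mem_iUnion₂.1 hxA
      obtain ⟨b, hbR, hxb⟩ := mem_iUnion₂.1 hxB
      exact hbR (haR.tail ⟨x, hxa, hxb⟩)
    have hAcl : IsClosed A :=
      Set.Finite.isClosed_biUnion (toFinite _) fun a _ => hLcl.preimage (hcont a)
    have hBcl : IsClosed B :=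
      Set.Finite.isClosed_biUnion (toFinite _) fun a _ => hLcl.preimage (hcont a)
    have hAcp : IsCompact A := hLcp.of_isClosed_subset hAcl hAL
    have hBcp : IsCompact B := hLcp.of_isClosed_subset hBcl hBL
    have hAne : A.Nonempty := by
      obtain ⟨y, hy⟩ := hpre_ne i
      exact ⟨y, mem_biUnion (Relation.ReflTransGen.refl) hy⟩
    have hBne : B.Nonempty := by
      obtain ⟨y, hy⟩ := hpre_ne j
      exact ⟨y, mem_biUnion hnot hy⟩
    rcases preconn_side hLconn.isPreconnected hLAB hAcp hBcp hABdisj with hd | hd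
    · obtain ⟨x, hx⟩ := hBne
      exact Set.disjoint_left.mp hd (hBL hx) hx
    · obtain ⟨x, hx⟩ := hAne
      exact Set.disjoint_left.mp hd (hAL hx) hx
  · intro hchain
    refine ⟨hLne, ?_⟩
    by_contra hnp
    rw [IsPreconnected] at hnp
    push_neg at hnp
    obtain ⟨U, V, hU, hV, hsUV, hsu, hsv, hempty⟩ := hnp
    set A := L ∩ U with hAdef
    set B := L ∩ V with hBdef
    have hABdisj : Disjoint A B := by
      rw [Set.disjoint_left]
      rintro x ⟨hxL, hxU⟩ ⟨_, hxV⟩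
      have : x ∈ L ∩ (U ∩ V) := ⟨hxL, hxU, hxV⟩
      rw [hempty] at this
      exact this
    have hAeq : A = L ∩ Vᶜ := by
      ext x
      constructor
      · rintro ⟨hxL, hxU⟩
        refine ⟨hxL, fun hxV => ?_⟩
        have : x ∈ L ∩ (U ∩ V) := ⟨hxL, hxU, hxV⟩
        rw [hempty] at this
        exact this
      · rintro ⟨hxL, hxV⟩
        rcases hsUV hxL with hx | hx
        · exact ⟨hxL, hx⟩
        · exact absurd hx hxV
    have hBeq : B = L ∩ Uᶜ := by
      ext x
      constructor
      · rintro ⟨hxL, hxV⟩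
        refine ⟨hxL, fun hxU => ?_⟩
        have : x ∈ L ∩ (U ∩ V) := ⟨hxL, hxU, hxV⟩
        rw [hempty] at this
        exact this
      · rintro ⟨hxL, hxU⟩
        rcases hsUV hxL with hx | hx
        · exact absurd hx hxU
        · exact ⟨hxL, hx⟩
    have hAcl : IsClosed A := hAeq ▸ hLcl.inter hV.isClosed_compl
    have hBcl : IsClosed B := hBeq ▸ hLcl.inter hU.isClosed_compl
    have hAcp : IsCompact A := hLcp.of_isClosed_subset hAcl inter_subset_left
    have hBcp : IsCompact B := hLcp.of_isClosed_subset hBcl inter_subset_left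
    have hLeqAB : L ⊆ A ∪ B := by
      intro z hz
      rcases hsUV hz with hx | hx
      · exact Or.inl ⟨hz, hx⟩
      · exact Or.inr ⟨hz, hx⟩
    -- every infinite word is eventually one-sided
    have honeside : ∀ x : ℕ → Fin m, ∃ N : ℕ,
        bwdPre h L (wordTrunc x (N + 1)) ⊆ A ∨ bwdPre h L (wordTrunc x (N + 1)) ⊆ B := by
      intro x
      set K : ℕ → Set X := fun j => bwdPre h L (wordTrunc x (j + 1)) with hK
      have hKanti : Antitone K := fun j k hjk =>
        bwdPre_trunc_antitone hinv x (Nat.succ_le_succ hjk)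
      have hKcl : ∀ j, IsClosed (K j) := fun j => bwdPre_isClosed hcont hLcl _
      have hKL : ∀ j, K j ⊆ L := fun j => bwdPre_subset hinv _
      have hlimAB : bwdLimSet h L x ⊆ A ∪ B :=
        fun z hz => hLeqAB (hKL 0 (mem_iInter.1 hz 0))
      have key : ∀ C : Set X, IsCompact C → IsClosed C → C ⊆ L →
          Disjoint (bwdLimSet h L x) C → ∃ N, Disjoint (K N) C := by
        intro C hC hCcl hCL hdisjC
        by_contra hcon
        push_neg at hcon
        have hne : ∀ j, (K j ∩ C).Nonempty := by
          intro j
          rcases Set.not_disjoint_iff.1 (hcon j) with ⟨z, hz1, hz2⟩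
          exact ⟨z, hz1, hz2⟩
        have hdir : Directed (· ⊇ ·) fun j => K j ∩ C := fun j k =>
          ⟨max j k, inter_subset_inter_left _ (hKanti (le_max_left j k)),
            inter_subset_inter_left _ (hKanti (le_max_right j k))⟩
        have hcp : ∀ j, IsCompact (K j ∩ C) := fun j => hC.inter_left (hKcl j)
        have hcl : ∀ j, IsClosed (K j ∩ C) := fun j => (hKcl j).inter hCcl
        have hint := IsCompact.nonempty_iInter_of_directed_nonempty_isCompact_isClosed
          (fun j => K j ∩ C) hdir hne hcp hcl
        obtain ⟨z, hz⟩ := hint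
        have hz' := mem_iInter.1 hz
        exact Set.disjoint_left.mp hdisjC
          (mem_iInter.2 fun j => (hz' j).1) (hz' 0).2
      rcases preconn_side (hconn x).isPreconnected hlimAB hAcp hBcp hABdisj with hd | hd
      · obtain ⟨N, hN⟩ := key B hBcp hBcl inter_subset_left hd
        refine ⟨N, Or.inl fun z hz => ?_⟩
        rcases hLeqAB (hKL N hz) with hzA | hzB
        · exact hzA
        · exact absurd hzB (Set.disjoint_left.mp hN hz)
      · obtain ⟨N, hN⟩ := key A hAcp hAcl inter_subset_left hd
        refine ⟨N, Or.inr fun z hz => ?_⟩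
        rcases hLeqAB (hKL N hz) with hzA | hzB
        · exact absurd hzA (Set.disjoint_left.mp hN hz)
        · exact hzB
    -- uniformity via compactness of the word space
    have hfin : Nonempty (Fin m) := ⟨⟨0, hm⟩⟩
    have huniform : ∃ N : ℕ, ∀ w : List (Fin m), w.length = N →
        bwdPre h L w ⊆ A ∨ bwdPre h L w ⊆ B := by
      choose Nf hNf using honeside
      set O : (ℕ → Fin m) → Set (ℕ → Fin m) := fun x =>
        ⋂ i ∈ Finset.range (Nf x + 1), (fun y : ℕ → Fin m => y i) ⁻¹' {x i} with hO
      have hOopen : ∀ x, IsOpen (O x) := fun x =>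
        isOpen_biInter_finset fun i _ => (continuous_apply i).isOpen_preimage _ (isOpen_discrete _)
      have hcover : (univ : Set (ℕ → Fin m)) ⊆ ⋃ x, O x := fun x _ =>
        mem_iUnion.2 ⟨x, mem_iInter₂.2 fun i _ => rfl⟩
      obtain ⟨t, ht⟩ := isCompact_univ.elim_finite_subcover O hOopen hcover
      refine ⟨t.sup fun x => Nf x + 1, ?_⟩
      intro w hwl
      set N := t.sup fun x => Nf x + 1 with hNdef
      set y : ℕ → Fin m := fun i => w.getD i ⟨0, hm⟩ with hy
      obtain ⟨x₀, hx₀t, hyx₀⟩ := mem_iUnion₂.1 (ht (mem_univ y))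
      have hyx : ∀ i < Nf x₀ + 1, y i = x₀ i := by
        intro i hi
        have := mem_iInter₂.1 hyx₀ i (Finset.mem_range.2 hi)
        exact this
      have htrunc : wordTrunc y (Nf x₀ + 1) = wordTrunc x₀ (Nf x₀ + 1) :=
        congrArg List.ofFn (funext fun i => hyx i.val i.isLt)
      have hle : Nf x₀ + 1 ≤ N := Finset.le_sup (f := fun x => Nf x + 1) hx₀t
      have hwy : wordTrunc y N = w := by
        apply List.ext_getElem (by simp [wordTrunc, hwl])
        intro i h1 h2
        simp only [wordTrunc] at h1 ⊢
        rw [List.getElem_ofFn]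
        simp [hy, List.getD_eq_getElem, h2]
      have hsub : bwdPre h L w ⊆ bwdPre h L (wordTrunc x₀ (Nf x₀ + 1)) := by
        rw [← hwy, ← htrunc]
        exact bwdPre_trunc_antitone hinv y hle
      rcases hNf x₀ with hside | hside
      · exact Or.inl (hsub.trans hside)
      · exact Or.inr (hsub.trans hside)
    obtain ⟨N, hN⟩ := huniform
    -- chains at level N
    have hbase : ∀ i j : Fin m, Relation.ReflTransGen R1 i j := by
      intro i j
      obtain ⟨n, c, h0, hn, hsteps⟩ := hchain i j
      have := reflTransGen_of_chain (r := R1) n c hsteps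
      rwa [h0, hn] at this
    obtain ⟨za, hzaL, hzaU⟩ := hsu
    obtain ⟨zb, hzbL, hzbV⟩ := hsv
    obtain ⟨wa, hwal, hwa⟩ := exists_word hinv N za hzaL
    obtain ⟨wb, hwbl, hwb⟩ := exists_word hinv N zb hzbL
    have hchainN := chain_all hinv hfib hbase N wa wb hwal hwbl
    have hAside : bwdPre h L wa ⊆ A := by
      rcases hN wa hwal with hside | hside
      · exact hside
      · exact absurd (hside hwa) fun hzB =>
          Set.disjoint_left.mp hABdisj ⟨hzaL, hzaU⟩ hzB
    have hall : ∀ v, Relation.ReflTransGen (chainRel h L N) wa v → bwdPre h L v ⊆ A := by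
      intro v hv
      induction hv with
      | refl => exact hAside
      | @tail p q _ hpq ih =>
        rcases hN q hpq.2.1 with hside | hside
        · exact hside
        · exfalso
          obtain ⟨z, hzp, hzq⟩ := hpq.2.2
          exact Set.disjoint_left.mp hABdisj (ih hzp) (hside hzq)
    exact Set.disjoint_left.mp hABdisj (hall wb hchainN hwb) ⟨hzbL, hzbV⟩
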